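/- arXiv:2404.04651 — 4 statements merged into one kernel-verified Lean document; each statement's English description precedes it below -/
import Mathlib

section
/- For all ρ > 0, β > 0 and z > 0, the Wright function satisfies Γ(β+ρ)·φ(ρ, β+ρ; z) ≤ Γ(β)·φ(ρ, β; z). -/
noncomputable def wrightGen (ρ β z : ℝ) : ℝ :=
  ∑' k : ℕ, z ^ k / (k.factorial * Real.Gamma (ρ * k + β))

/-!
Since `log ∘ Γ` is convex on `(0, ∞)`, its increments `log Γ(x + ρ) - log Γ x` increase with `x`,
i.e. `Γ(x + ρ) / Γ x` is increasing. Applied to `x = β ≤ ρ k + β`, this compares the `k`-th terms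
of the two series: `Γ(β + ρ) / Γ(ρ k + β + ρ) ≤ Γ β / Γ(ρ k + β)`.
-/

open Real

theorem ConvexOn.map_add_sub_map_le {𝕜 : Type*} [Field 𝕜] [LinearOrder 𝕜]
    [IsStrictOrderedRing 𝕜] {s : Set 𝕜} {f : 𝕜 → 𝕜} (hf : ConvexOn 𝕜 s f) {x y d : 𝕜}
    (hx : x ∈ s) (hyd : y + d ∈ s) (hxy : x ≤ y) (hd : 0 ≤ d) :
    f (x + d) - f x ≤ f (y + d) - f y := by
  rcases hd.eq_or_lt with rfl | hd
  · simp
  have hxd : x + d ∈ s := hf.1.ordConnected.out hx hyd ⟨by linarith, by linarith⟩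
  have hy : y ∈ s := hf.1.ordConnected.out hx hyd ⟨hxy, by linarith⟩
  have h₁ := hf.secant_mono hx hxd hyd (by linarith) (by linarith) (by linarith)
  have h₂ := hf.secant_mono hyd hx hy (by linarith) (by linarith) hxy
  have hyx : 0 < y + d - x := by linarith
  rw [add_sub_cancel_left] at h₁
  rw [show x - (y + d) = -(y + d - x) by ring, show y - (y + d) = -d by ring, div_neg, div_neg,
    neg_le_neg_iff, div_le_div_iff₀ hd hyx] at h₂
  rw [div_le_div_iff₀ hd hyx] at h₁
  nlinarith

theorem Real.Gamma_add_mul_Gamma_le {x y d : ℝ} (hx : 0 < x) (hxy : x ≤ y) (hd : 0 ≤ d) :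
    Gamma (x + d) * Gamma y ≤ Gamma x * Gamma (y + d) := by
  have hlog := convexOn_log_Gamma.map_add_sub_map_le hx (show 0 < y + d by linarith) hxy hd
  simp only [Function.comp_apply] at hlog
  have hx' := Gamma_pos_of_pos hx
  have hxd := Gamma_pos_of_pos (show 0 < x + d by linarith)
  have hy := Gamma_pos_of_pos (show 0 < y by linarith)
  have hyd := Gamma_pos_of_pos (show 0 < y + d by linarith)
  rw [← log_le_log_iff (mul_pos hxd hy) (mul_pos hx' hyd), log_mul hxd.ne' hy.ne',
    log_mul hx'.ne' hyd.ne']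
  linarith

theorem summable_pow_div_factorial_mul_Gamma {ρ : ℝ} (hρ : 0 < ρ) (β z : ℝ) :
    Summable fun k : ℕ => z ^ k / (k.factorial * Gamma (ρ * k + β)) := by
  refine Summable.of_norm_bounded_eventually_nat (Real.summable_pow_div_factorial ‖z‖) ?_
  have hlarge : ∀ᶠ k : ℕ in Filter.atTop, 2 ≤ ρ * k + β :=
    Filter.tendsto_atTop.mp (Filter.tendsto_atTop_add_const_right _ β
      ((tendsto_natCast_atTop_atTop (R := ℝ)).const_mul_atTop hρ)) 2
  filter_upwards [hlarge] with k hk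
  have hGamma : 1 ≤ Gamma (ρ * k + β) := by
    simpa [Gamma_two] using Gamma_strictMonoOn_Ici.monotoneOn (Set.mem_Ici.mpr le_rfl) hk hk
  rw [norm_div, norm_mul, norm_pow, Real.norm_of_nonneg (by positivity : (0 : ℝ) ≤ k.factorial),
    Real.norm_of_nonneg (by linarith : (0 : ℝ) ≤ Gamma (ρ * k + β))]
  exact div_le_div_of_nonneg_left (by positivity) (by positivity) (le_mul_of_one_le_right
    (by positivity) hGamma)

theorem stmt_0 (ρ β z : ℝ) (hρ : 0 < ρ) (hβ : 0 < β) (hz : 0 < z) :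
    Real.Gamma (β + ρ) * wrightGen ρ (β + ρ) z ≤ Real.Gamma β * wrightGen ρ β z := by
  unfold wrightGen
  rw [← tsum_mul_left, ← tsum_mul_left]
  refine Summable.tsum_le_tsum (fun k => ?_)
    ((summable_pow_div_factorial_mul_Gamma hρ _ z).mul_left _)
    ((summable_pow_div_factorial_mul_Gamma hρ β z).mul_left _)
  have hk : β ≤ ρ * k + β := le_add_of_nonneg_left (by positivity)
  have hratio : Gamma (β + ρ) / Gamma (ρ * k + β + ρ) ≤ Gamma β / Gamma (ρ * k + β) := by
    rw [div_le_div_iff₀ (Gamma_pos_of_pos (by positivity)) (Gamma_pos_of_pos (by positivity))]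
    exact Gamma_add_mul_Gamma_le hβ hk hρ.le
  calc Gamma (β + ρ) * (z ^ k / (k.factorial * Gamma (ρ * k + (β + ρ))))
      = z ^ k / k.factorial * (Gamma (β + ρ) / Gamma (ρ * k + β + ρ)) := by
        rw [← add_assoc]; field_simp
    _ ≤ z ^ k / k.factorial * (Gamma β / Gamma (ρ * k + β)) := by gcongr
    _ = Gamma β * (z ^ k / (k.factorial * Gamma (ρ * k + β))) := by field_simp
end

section
/- Fix β > 1, n ∈ ℕ with n ≥ 1, and x ≥ 0. For the Wright operator W_n^{(β)}(f; x) = (1/φ(1,β;nx)) · ∑_{k=0}^∞ f((k+β)/n) · (nx)^k/(k!·Γ(k+β)) applied to f(t) = t, one has the exact identity W_n^{(β)}(t; x) = x · φ(1,β+1;nx)/φ(1,β;nx) + β/n. -/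
noncomputable def wright (β z : ℝ) : ℝ :=
  ∑' k : ℕ, z ^ k / (k.factorial * Real.Gamma ((k : ℝ) + β))

noncomputable def W (β : ℝ) (n : ℕ) (f : ℝ → ℝ) (x : ℝ) : ℝ :=
  (wright β (n * x))⁻¹ *
    ∑' k : ℕ, f (((k : ℝ) + β) / n) * (n * x) ^ k / (k.factorial * Real.Gamma ((k : ℝ) + β))

lemma gamma_lb {β : ℝ} (hβ : 1 ≤ β) (k : ℕ) :
    (k.factorial : ℝ) * Real.Gamma β ≤ Real.Gamma ((k : ℝ) + β) := by
  have hΓβ : 0 < Real.Gamma β := Real.Gamma_pos_of_pos (by linarith)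
  induction k with
  | zero => simp
  | succ k ih =>
    have hk : ((k : ℝ) + β) ≠ 0 := by positivity
    have h1 : Real.Gamma (((k + 1 : ℕ) : ℝ) + β) = ((k : ℝ) + β) * Real.Gamma ((k : ℝ) + β) := by
      rw [show (((k + 1 : ℕ) : ℝ) + β) = ((k : ℝ) + β) + 1 by push_cast; ring,
        Real.Gamma_add_one hk]
    rw [h1]
    calc ((k + 1).factorial : ℝ) * Real.Gamma β
        = ((k : ℝ) + 1) * ((k.factorial : ℝ) * Real.Gamma β) := by
          rw [Nat.factorial_succ]; push_cast; ring
      _ ≤ ((k : ℝ) + β) * Real.Gamma ((k : ℝ) + β) := by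
          apply mul_le_mul (by linarith) ih (by positivity) (by positivity)

lemma summable_a {β z : ℝ} (hβ : 1 ≤ β) (hz : 0 ≤ z) :
    Summable (fun k : ℕ => z ^ k / (k.factorial * Real.Gamma ((k : ℝ) + β))) := by
  have hΓβ : 0 < Real.Gamma β := Real.Gamma_pos_of_pos (by linarith)
  refine Summable.of_nonneg_of_le (fun k => by positivity) (fun k => ?_)
    ((Real.summable_pow_div_factorial z).mul_left (Real.Gamma β)⁻¹)
  have h1 : (1 : ℝ) ≤ k.factorial := by exact_mod_cast k.factorial_pos
  have hG : Real.Gamma β ≤ Real.Gamma ((k : ℝ) + β) := by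
    calc Real.Gamma β = 1 * Real.Gamma β := (one_mul _).symm
      _ ≤ (k.factorial : ℝ) * Real.Gamma β := by nlinarith
      _ ≤ _ := gamma_lb hβ k
  have hkf : (0:ℝ) < k.factorial := by exact_mod_cast k.factorial_pos
  rw [inv_mul_eq_div, div_div]
  gcongr

theorem stmt_5 (β : ℝ) (hβ : 1 < β) (n : ℕ) (hn : 1 ≤ n) (x : ℝ) (hx : 0 ≤ x) :
    W β n (fun t => t) x
      = x * wright (β + 1) (n * x) / wright β (n * x) + β / n := by
  have hn0 : (0:ℝ) < n := by exact_mod_cast hn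
  set z : ℝ := (n : ℝ) * x with hzdef
  have hz : 0 ≤ z := by positivity
  have hβ1 : 1 ≤ β := hβ.le
  have hsa : Summable (fun k : ℕ => z ^ k / (k.factorial * Real.Gamma ((k : ℝ) + β))) :=
    summable_a hβ1 hz
  have hsa' : Summable (fun k : ℕ => z ^ k / (k.factorial * Real.Gamma ((k : ℝ) + (β + 1)))) :=
    summable_a (by linarith) hz
  -- define c
  set c : ℕ → ℝ := fun k => (k : ℝ) * (z ^ k / (k.factorial * Real.Gamma ((k : ℝ) + β))) with hcdef
  have hc : ∀ k : ℕ, c (k + 1) = z * (z ^ k / (k.factorial * Real.Gamma ((k : ℝ) + (β + 1)))) := by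
    intro k
    have hΓ : Real.Gamma ((k : ℝ) + (β + 1)) ≠ 0 :=
      (Real.Gamma_pos_of_pos (by positivity)).ne'
    have harg : (((k + 1 : ℕ) : ℝ) + β) = (k : ℝ) + (β + 1) := by push_cast; ring
    have hkf : ((k).factorial : ℝ) ≠ 0 := by exact_mod_cast k.factorial_pos.ne'
    simp only [hcdef, harg, Nat.factorial_succ]
    push_cast
    field_simp
    ring
  have hsc : Summable c := by
    refine (summable_nat_add_iff 1).mp ?_
    have : (fun k : ℕ => c (k + 1))
        = fun k : ℕ => z * (z ^ k / (k.factorial * Real.Gamma ((k : ℝ) + (β + 1)))) :=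
      funext hc
    rw [this]
    exact hsa'.mul_left z
  have htc : ∑' k, c k = z * wright (β + 1) z := by
    rw [Summable.tsum_eq_zero_add hsc]
    have h0 : c 0 = 0 := by simp [hcdef]
    rw [h0, zero_add]
    calc ∑' k : ℕ, c (k + 1)
        = ∑' k : ℕ, z * (z ^ k / (k.factorial * Real.Gamma ((k : ℝ) + (β + 1)))) := by
          exact tsum_congr hc
      _ = z * wright (β + 1) z := by rw [tsum_mul_left]; rfl
  -- main sum
  have hterm : ∀ k : ℕ,
      (((k : ℝ) + β) / n) * z ^ k / (k.factorial * Real.Gamma ((k : ℝ) + β))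
        = (1 / n) * (c k + β * (z ^ k / (k.factorial * Real.Gamma ((k : ℝ) + β)))) := by
    intro k
    simp only [hcdef]
    ring
  have hmain : (∑' k : ℕ, (((k : ℝ) + β) / n) * z ^ k / (k.factorial * Real.Gamma ((k : ℝ) + β)))
      = (1 / n) * (z * wright (β + 1) z + β * wright β z) := by
    calc (∑' k : ℕ, (((k : ℝ) + β) / n) * z ^ k / (k.factorial * Real.Gamma ((k : ℝ) + β)))
        = ∑' k : ℕ, (1 / (n:ℝ)) * (c k + β * (z ^ k / (k.factorial * Real.Gamma ((k : ℝ) + β)))) :=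
          tsum_congr hterm
      _ = (1 / (n:ℝ)) * ∑' k : ℕ, (c k + β * (z ^ k / (k.factorial * Real.Gamma ((k : ℝ) + β)))) :=
          tsum_mul_left
      _ = (1 / (n:ℝ)) * (∑' k : ℕ, c k + ∑' k : ℕ, β * (z ^ k / (k.factorial * Real.Gamma ((k : ℝ) + β)))) := by
          rw [Summable.tsum_add hsc (hsa.mul_left β)]
      _ = (1 / n) * (z * wright (β + 1) z + β * wright β z) := by
          rw [htc, tsum_mul_left]; rfl
  -- positivity of wright β z
  have hw : 0 < wright β z := by
    apply Summable.tsum_pos hsa (fun k => by positivity) 0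
    have : Real.Gamma ((0:ℕ) + β) > 0 := Real.Gamma_pos_of_pos (by push_cast; linarith)
    simp only [pow_zero, Nat.factorial_zero]
    push_cast at this ⊢
    positivity
  have hwne : wright β z ≠ 0 := hw.ne'
  unfold W
  rw [← hzdef, hmain]
  field_simp
  ring
end

section
/- Fix β > 1. There exists a constant M(β) such that for every function f : [0,∞) → ℝ with ‖f‖₂ := sup_{x≥0} |f(x)|/(1+x²) finite, and every n ≥ 1, one has sup_{x≥0} |W_n^{(β)}(f;x)|/(1+x²) ≤ M(β)·‖f‖₂; that is, the Wright operators are uniformly bounded on the weighted space with weight 1/(1+x²). -/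
/-!
`W_n` is a positive linear operator, so `|W_n f| ≤ A · W_n (1 + t²)` and everything reduces to
bounding the second moment. With `z = n x` and weights `w_k = z^k / (k! Γ(k + β))`, the falling
factorial moments satisfy `∑ k(k-1)⋯(k-j+1) w_k ≤ z^j ∑ w_k`: the falling factorial cancels
against `k!`, and `Γ(k - j + β) ≤ Γ(k + β)` because `Γ(s) ≤ s Γ(s) = Γ(s + 1)` for `s ≥ 1`.
Expanding `(k + β)²` in falling factorials gives `W_n(t²)(x) ≤ (x + β)² + x`.
-/

open Real

theorem Real.Gamma_le_Gamma_add_one {s : ℝ} (hs : 1 ≤ s) : Gamma s ≤ Gamma (s + 1) := by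
  rw [Gamma_add_one (by positivity)]
  exact le_mul_of_one_le_left (Gamma_pos_of_pos (by linarith)).le hs

theorem Real.Gamma_le_Gamma_add_natCast {s : ℝ} (hs : 1 ≤ s) (m : ℕ) :
    Gamma s ≤ Gamma (s + m) := by
  induction m with
  | zero => simp
  | succ m ih =>
    calc Gamma s ≤ Gamma (s + m) := ih
      _ ≤ Gamma (s + m + 1) := Gamma_le_Gamma_add_one (by linarith [m.cast_nonneg (α := ℝ)])
      _ = Gamma (s + (m + 1 : ℕ)) := by push_cast; ring_nf

noncomputable def wrightTerm (β z : ℝ) (k : ℕ) : ℝ :=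
  z ^ k / (k.factorial * Gamma ((k : ℝ) + β))

theorem wright_eq_tsum_wrightTerm (β z : ℝ) : wright β z = ∑' k, wrightTerm β z k := rfl

theorem W_eq_tsum_wrightTerm (β : ℝ) (n : ℕ) (f : ℝ → ℝ) (x : ℝ) :
    W β n f x = (wright β (n * x))⁻¹ *
      ∑' k : ℕ, f (((k : ℝ) + β) / n) * wrightTerm β (n * x) k := by
  simp only [W, wrightTerm, mul_div_assoc]

theorem W_const_mul (β : ℝ) (n : ℕ) (c : ℝ) (f : ℝ → ℝ) (x : ℝ) :
    W β n (fun t => c * f t) x = c * W β n f x := by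
  simp only [W_eq_tsum_wrightTerm, mul_assoc, tsum_mul_left]
  ring

section

variable {β z : ℝ}

theorem wrightTerm_nonneg (hβ : 0 < β) (hz : 0 ≤ z) (k : ℕ) : 0 ≤ wrightTerm β z k := by
  have := Gamma_pos_of_pos (by positivity : 0 < (k : ℝ) + β)
  unfold wrightTerm
  positivity

theorem wrightTerm_le (hβ : 1 ≤ β) (hz : 0 ≤ z) (k : ℕ) :
    wrightTerm β z k ≤ z ^ k / k.factorial / Gamma β := by
  rw [wrightTerm, ← div_div]
  refine div_le_div_of_nonneg_left (by positivity) (Gamma_pos_of_pos (by linarith)) ?_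
  simpa only [add_comm] using Gamma_le_Gamma_add_natCast hβ k

theorem summable_wrightTerm (hβ : 1 ≤ β) (hz : 0 ≤ z) : Summable (wrightTerm β z) :=
  .of_nonneg_of_le (wrightTerm_nonneg (by linarith) hz) (wrightTerm_le hβ hz)
    ((summable_pow_div_factorial z).div_const _)

theorem wright_pos (hβ : 1 ≤ β) (hz : 0 ≤ z) : 0 < wright β z := by
  refine (summable_wrightTerm hβ hz).tsum_pos (wrightTerm_nonneg (by linarith) hz) 0 ?_
  simpa [wrightTerm] using Gamma_pos_of_pos (by linarith : 0 < β)

theorem pow_mul_wrightTerm (β c z : ℝ) (k : ℕ) :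
    c ^ k * wrightTerm β z k = wrightTerm β (c * z) k := by
  rw [wrightTerm, wrightTerm, mul_pow, mul_div_assoc]

theorem summable_pow_mul_wrightTerm (hβ : 1 ≤ β) (hz : 0 ≤ z) (j : ℕ) :
    Summable fun k : ℕ => (k : ℝ) ^ j * wrightTerm β z k := by
  have hw : ∀ k, 0 ≤ wrightTerm β z k := wrightTerm_nonneg (by linarith) hz
  refine .of_nonneg_of_le (fun k => mul_nonneg (by positivity) (hw k)) (fun k => ?_)
    (summable_wrightTerm hβ (by positivity : 0 ≤ 2 ^ j * z))
  rw [← pow_mul_wrightTerm, ← pow_mul, mul_comm j, pow_mul]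
  gcongr
  · exact hw k
  · exact_mod_cast Nat.lt_two_pow_self.le

theorem descFactorial_mul_wrightTerm_le (hβ : 1 ≤ β) (hz : 0 ≤ z) (j k : ℕ) :
    ((k + j).descFactorial j : ℝ) * wrightTerm β z (k + j) ≤ z ^ j * wrightTerm β z k := by
  have hfac : ((k + j).descFactorial j : ℝ) * k.factorial = (k + j).factorial := by
    have := Nat.factorial_mul_descFactorial (Nat.le_add_left j k)
    rw [Nat.add_sub_cancel] at this
    exact_mod_cast (mul_comm _ _).trans this
  have hΓ : Gamma ((k : ℝ) + β) ≤ Gamma (((k + j : ℕ) : ℝ) + β) := by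
    have := Gamma_le_Gamma_add_natCast (s := k + β) (by linarith [k.cast_nonneg (α := ℝ)]) j
    rwa [add_right_comm, ← Nat.cast_add] at this
  calc ((k + j).descFactorial j : ℝ) * wrightTerm β z (k + j)
      = z ^ j * (z ^ k / (k.factorial * Gamma (((k + j : ℕ) : ℝ) + β))) := by
        rw [wrightTerm, ← hfac, pow_add]
        field_simp
    _ ≤ z ^ j * wrightTerm β z k := by
        rw [wrightTerm]
        gcongr

theorem summable_descFactorial_mul_wrightTerm (hβ : 1 ≤ β) (hz : 0 ≤ z) (j : ℕ) :
    Summable fun k : ℕ => (k.descFactorial j : ℝ) * wrightTerm β z k := by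
  have hw : ∀ k, 0 ≤ wrightTerm β z k := wrightTerm_nonneg (by linarith) hz
  refine .of_nonneg_of_le (fun k => mul_nonneg (by positivity) (hw k)) (fun k => ?_)
    (summable_pow_mul_wrightTerm hβ hz j)
  gcongr
  · exact hw k
  · exact_mod_cast Nat.descFactorial_le_pow k j

theorem tsum_descFactorial_mul_wrightTerm_le (hβ : 1 ≤ β) (hz : 0 ≤ z) (j : ℕ) :
    ∑' k : ℕ, (k.descFactorial j : ℝ) * wrightTerm β z k ≤ z ^ j * wright β z := by
  have hs := summable_descFactorial_mul_wrightTerm hβ hz j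
  rw [← hs.sum_add_tsum_nat_add j, Finset.sum_eq_zero, zero_add, wright_eq_tsum_wrightTerm,
    ← tsum_mul_left]
  · exact ((summable_nat_add_iff j).mpr hs).tsum_le_tsum
      (descFactorial_mul_wrightTerm_le hβ hz j) ((summable_wrightTerm hβ hz).mul_left _)
  · intro k hk
    rw [Nat.descFactorial_eq_zero_iff_lt.mpr (Finset.mem_range.mp hk), Nat.cast_zero, zero_mul]

theorem add_sq_eq_descFactorial (β : ℝ) (k : ℕ) :
    ((k : ℝ) + β) ^ 2 = k.descFactorial 2 + (2 * β + 1) * k.descFactorial 1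
      + β ^ 2 * k.descFactorial 0 := by
  cases k with
  | zero => simp
  | succ k =>
    simp only [Nat.descFactorial_succ, Nat.descFactorial_zero, Nat.add_sub_cancel, Nat.sub_zero]
    push_cast
    ring

theorem hasSum_add_sq_mul_wrightTerm (hβ : 1 ≤ β) (hz : 0 ≤ z) :
    HasSum (fun k : ℕ => ((k : ℝ) + β) ^ 2 * wrightTerm β z k)
      (∑' k : ℕ, (k.descFactorial 2 : ℝ) * wrightTerm β z k
        + (2 * β + 1) * ∑' k : ℕ, (k.descFactorial 1 : ℝ) * wrightTerm β z k
        + β ^ 2 * ∑' k : ℕ, (k.descFactorial 0 : ℝ) * wrightTerm β z k) := by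
  have hs := fun j => (summable_descFactorial_mul_wrightTerm hβ hz j).hasSum
  convert ((hs 2).add ((hs 1).mul_left (2 * β + 1))).add ((hs 0).mul_left (β ^ 2)) using 2 with k
  rw [add_sq_eq_descFactorial]
  ring

theorem tsum_add_sq_mul_wrightTerm_le (hβ : 1 ≤ β) (hz : 0 ≤ z) :
    ∑' k : ℕ, ((k : ℝ) + β) ^ 2 * wrightTerm β z k ≤ ((z + β) ^ 2 + z) * wright β z := by
  have hm := tsum_descFactorial_mul_wrightTerm_le hβ hz
  have h1 := mul_le_mul_of_nonneg_left (hm 1) (by linarith : 0 ≤ 2 * β + 1)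
  have h0 := mul_le_mul_of_nonneg_left (hm 0) (sq_nonneg β)
  rw [(hasSum_add_sq_mul_wrightTerm hβ hz).tsum_eq]
  linear_combination hm 2 + h1 + h0

theorem hasSum_one_add_sq_mul_wrightTerm (hβ : 1 ≤ β) (hz : 0 ≤ z) (c : ℝ) :
    HasSum (fun k : ℕ => (1 + (((k : ℝ) + β) / c) ^ 2) * wrightTerm β z k)
      (wright β z + (∑' k : ℕ, ((k : ℝ) + β) ^ 2 * wrightTerm β z k) / c ^ 2) := by
  rw [wright_eq_tsum_wrightTerm]
  convert (summable_wrightTerm hβ hz).hasSum.add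
    ((hasSum_add_sq_mul_wrightTerm hβ hz).summable.hasSum.div_const (c ^ 2)) using 1
  funext k
  ring

end

theorem abs_W_le_W {β : ℝ} (hβ : 0 < β) {n : ℕ} {x : ℝ} (hx : 0 ≤ x) {f g : ℝ → ℝ}
    (hfg : ∀ t, 0 ≤ t → |f t| ≤ g t)
    (hg : Summable fun k : ℕ => g (((k : ℝ) + β) / n) * wrightTerm β (n * x) k) :
    |W β n f x| ≤ W β n g x := by
  have hw : ∀ k, 0 ≤ wrightTerm β (n * x) k := wrightTerm_nonneg hβ (by positivity)
  have hφ : 0 ≤ wright β (n * x) := tsum_nonneg hw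
  rw [W_eq_tsum_wrightTerm, W_eq_tsum_wrightTerm, abs_mul, abs_of_nonneg (inv_nonneg.2 hφ)]
  have hbound (k : ℕ) :
      ‖f (((k : ℝ) + β) / n) * wrightTerm β (n * x) k‖ ≤
        g (((k : ℝ) + β) / n) * wrightTerm β (n * x) k := by
    rw [Real.norm_eq_abs, abs_mul, abs_of_nonneg (hw k)]
    exact mul_le_mul_of_nonneg_right (hfg _ (by positivity)) (hw k)
  gcongr
  simpa only [Real.norm_eq_abs] using tsum_of_norm_bounded hg.hasSum hbound

theorem W_one_add_sq_le {β : ℝ} (hβ : 1 ≤ β) {n : ℕ} (hn : 1 ≤ n) {x : ℝ} (hx : 0 ≤ x) :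
    W β n (fun t => 1 + t ^ 2) x ≤ (2 * β ^ 2 + 3) * (1 + x ^ 2) := by
  have hN : (1 : ℝ) ≤ n := by exact_mod_cast hn
  have hz : 0 ≤ (n : ℝ) * x := by positivity
  have hφ := wright_pos hβ hz
  have hT : ∑' k : ℕ, ((k : ℝ) + β) ^ 2 * wrightTerm β (n * x) k
      ≤ n ^ 2 * (((x + β) ^ 2 + x) * wright β (n * x)) := by
    rw [← mul_assoc]
    refine (tsum_add_sq_mul_wrightTerm_le hβ hz).trans ?_
    gcongr
    nlinarith [mul_le_mul_of_nonneg_left hN (by linarith : 0 ≤ β)]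
  have hT' := (div_le_iff₀' (by positivity)).2 hT
  have hpoly : 1 + ((x + β) ^ 2 + x) ≤ (2 * β ^ 2 + 3) * (1 + x ^ 2) := by
    nlinarith [sq_nonneg (x - β), sq_nonneg (x - 1)]
  rw [W_eq_tsum_wrightTerm, (hasSum_one_add_sq_mul_wrightTerm hβ hz n).tsum_eq,
    inv_mul_le_iff₀ hφ]
  nlinarith [mul_le_mul_of_nonneg_left hpoly hφ.le]

theorem stmt_13 (β : ℝ) (hβ : 1 < β) :
    ∃ M > 0, ∀ f : ℝ → ℝ, ∀ A : ℝ, 0 ≤ A →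
      (∀ t : ℝ, 0 ≤ t → |f t| ≤ A * (1 + t ^ 2)) →
      ∀ n : ℕ, 1 ≤ n → ∀ x : ℝ, 0 ≤ x →
        |W β n f x| / (1 + x ^ 2) ≤ M * A := by
  refine ⟨2 * β ^ 2 + 3, by positivity, fun f A hA hf n hn x hx => ?_⟩
  have hg : Summable fun k : ℕ => A * (1 + (((k : ℝ) + β) / n) ^ 2) * wrightTerm β (n * x) k := by
    simpa only [mul_assoc] using
      ((hasSum_one_add_sq_mul_wrightTerm hβ.le (by positivity) n).summable.mul_left A)
  rw [div_le_iff₀ (by positivity)]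
  calc |W β n f x| ≤ W β n (fun t => A * (1 + t ^ 2)) x := abs_W_le_W (by linarith) hx hf hg
    _ = A * W β n (fun t => 1 + t ^ 2) x := W_const_mul β n A _ x
    _ ≤ A * ((2 * β ^ 2 + 3) * (1 + x ^ 2)) := by gcongr; exact W_one_add_sq_le hβ.le hn hx
    _ = _ := by ring
end

section
/- Fix β > 1 and x ≥ 0. Then the ratio φ(1,β+1;nx)/φ(1,β;nx) ≤ 1/β for every n ≥ 1, and consequently W_n^{(β)}(t; x) ≤ x/β + β/n ≤ x + β/n. -/
private lemma gpos {β : ℝ} (hβ : 0 < β) (k : ℕ) : 0 < Real.Gamma ((k : ℝ) + β) :=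
  Real.Gamma_pos_of_pos (by positivity)

private lemma gge {β : ℝ} (hβ : 1 ≤ β) (k : ℕ) :
    Real.Gamma β ≤ Real.Gamma ((k : ℝ) + β) := by
  have h0 : (0:ℝ) < β := by linarith
  induction k with
  | zero => simp
  | succ n ih =>
    have h1 : Real.Gamma ((n:ℝ) + β + 1) = ((n:ℝ) + β) * Real.Gamma ((n:ℝ) + β) :=
      Real.Gamma_add_one (by positivity)
    have h2 := gpos h0 n
    have h3 : (0:ℝ) ≤ (n:ℝ) := Nat.cast_nonneg n
    push_cast
    rw [show (n:ℝ) + 1 + β = (n:ℝ) + β + 1 by ring, h1]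
    nlinarith

private lemma wsummable {β : ℝ} (hβ : 1 ≤ β) {z : ℝ} (hz : 0 ≤ z) :
    Summable (fun k : ℕ => z ^ k / (k.factorial * Real.Gamma ((k : ℝ) + β))) := by
  have h0 : (0:ℝ) < β := by linarith
  have hΓ : 0 < Real.Gamma β := Real.Gamma_pos_of_pos h0
  refine Summable.of_nonneg_of_le (fun k => by positivity) (fun k => ?_)
    ((Real.summable_pow_div_factorial z).div_const (Real.Gamma β))
  have hk : (0:ℝ) < (k.factorial : ℝ) := by positivity
  rw [div_div]
  gcongr
  exact gge hβ k

private lemma wpos {β : ℝ} (hβ : 1 ≤ β) {z : ℝ} (hz : 0 ≤ z) : 0 < wright β z := by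
  have h0 : (0:ℝ) < β := by linarith
  have hΓ : 0 < Real.Gamma β := Real.Gamma_pos_of_pos h0
  refine Summable.tsum_pos (wsummable hβ hz) (fun k => by positivity) 0 ?_
  have h : ((0:ℕ):ℝ) + β = β := by norm_num
  simp only [pow_zero, Nat.factorial_zero, Nat.cast_one, one_mul, h]
  positivity

private lemma key {β : ℝ} (hβ : 1 < β) {z : ℝ} (hz : 0 ≤ z) :
    β * wright (β + 1) z ≤ wright β z := by
  have h0 : (0:ℝ) < β := by linarith
  have hs1 : Summable (fun k : ℕ => z ^ k / (k.factorial * Real.Gamma ((k:ℝ) + (β+1)))) :=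
    wsummable (by linarith) hz
  have hs0 := wsummable hβ.le hz
  unfold wright
  rw [← tsum_mul_left]
  refine Summable.tsum_le_tsum (fun k => ?_) (hs1.mul_left β) hs0
  have hΓ := gpos h0 k
  have hfac : (0:ℝ) < (k.factorial : ℝ) := by positivity
  have hrec : Real.Gamma ((k:ℝ) + (β+1)) = ((k:ℝ)+β) * Real.Gamma ((k:ℝ)+β) := by
    rw [show (k:ℝ) + (β+1) = ((k:ℝ)+β) + 1 by ring]
    exact Real.Gamma_add_one (by positivity)
  have hkb : β ≤ (k:ℝ) + β := le_add_of_nonneg_left (Nat.cast_nonneg k)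
  rw [hrec, mul_div_assoc', div_le_div_iff₀ (by positivity) (by positivity)]
  have hzk : (0:ℝ) ≤ z ^ k := by positivity
  nlinarith [mul_le_mul_of_nonneg_right hkb
    (show (0:ℝ) ≤ z ^ k * ((k.factorial:ℝ) * Real.Gamma ((k:ℝ)+β)) by positivity)]

private lemma gsummable {β : ℝ} (hβ : 1 < β) {z : ℝ} (hz : 0 ≤ z) :
    Summable (fun k : ℕ => (k:ℝ) * z ^ k / (k.factorial * Real.Gamma ((k:ℝ) + β))) := by
  rw [← summable_nat_add_iff 1]
  refine ((wsummable (β := β + 1) (by linarith) hz).mul_left z).congr fun k => ?_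
  have hfac : (0:ℝ) < (k.factorial : ℝ) := by positivity
  have hΓ : Real.Gamma (((k+1:ℕ):ℝ) + β) = Real.Gamma ((k:ℝ) + (β+1)) := by
    norm_num; ring_nf
  rw [Nat.cast_add, Nat.cast_one] at hΓ
  push_cast [Nat.factorial_succ]
  rw [hΓ]
  have hΓp := gpos (show (0:ℝ) < β + 1 by linarith) k
  field_simp
  ring

private lemma sum_shift {β : ℝ} (hβ : 1 < β) {z : ℝ} (hz : 0 ≤ z) :
    ∑' k : ℕ, ((k:ℝ) + β) * z ^ k / (k.factorial * Real.Gamma ((k:ℝ) + β))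
      = z * wright (β+1) z + β * wright β z := by
  have hs0 := wsummable hβ.le hz
  have hg := gsummable hβ hz
  have hterm : ∀ k : ℕ, ((k:ℝ) + β) * z ^ k / (k.factorial * Real.Gamma ((k:ℝ) + β))
      = (k:ℝ) * z ^ k / (k.factorial * Real.Gamma ((k:ℝ) + β))
        + β * (z ^ k / (k.factorial * Real.Gamma ((k:ℝ) + β))) := fun k => by ring
  rw [tsum_congr hterm, Summable.tsum_add hg (hs0.mul_left β), tsum_mul_left]
  have h1 : ∑' k : ℕ, (k:ℝ) * z ^ k / (k.factorial * Real.Gamma ((k:ℝ) + β))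
      = z * wright (β+1) z := by
    rw [Summable.tsum_eq_zero_add hg]
    have h0g : ((0:ℕ):ℝ) * z ^ 0 / ((0:ℕ).factorial * Real.Gamma (((0:ℕ):ℝ) + β)) = 0 := by
      simp
    rw [h0g, zero_add]
    have hshift : ∀ k : ℕ, ((k+1:ℕ):ℝ) * z ^ (k+1) / ((k+1).factorial * Real.Gamma (((k+1:ℕ):ℝ) + β))
        = z * (z ^ k / (k.factorial * Real.Gamma ((k:ℝ) + (β+1)))) := by
      intro k
      have hfac : (0:ℝ) < (k.factorial : ℝ) := by positivity
      have hΓ : Real.Gamma (((k+1:ℕ):ℝ) + β) = Real.Gamma ((k:ℝ) + (β+1)) := by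
        norm_num; ring_nf
      rw [hΓ]
      have hΓp := gpos (show (0:ℝ) < β + 1 by linarith) k
      push_cast [Nat.factorial_succ]
      field_simp
      ring
    rw [tsum_congr hshift, tsum_mul_left]
    rfl
  rw [h1]
  rfl

theorem stmt_17 (β : ℝ) (hβ : 1 < β) (x : ℝ) (hx : 0 ≤ x) :
    (∀ n : ℕ, 1 ≤ n → wright (β + 1) (n * x) / wright β (n * x) ≤ 1 / β) ∧
    (∀ n : ℕ, 1 ≤ n →
      W β n (fun t => t) x ≤ x / β + β / n ∧ x / β + β / n ≤ x + β / n) := by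
  have h0 : (0:ℝ) < β := by linarith
  have hratio : ∀ n : ℕ, 1 ≤ n → wright (β + 1) (n * x) / wright β (n * x) ≤ 1 / β := by
    intro n hn
    have hz : (0:ℝ) ≤ (n:ℝ) * x := by positivity
    have hw := wpos hβ.le hz
    rw [div_le_div_iff₀ hw h0]
    have := key hβ hz
    nlinarith
  refine ⟨hratio, fun n hn => ?_⟩
  have hn0 : (0:ℝ) < (n:ℝ) := by exact_mod_cast hn
  constructor
  · have hz : (0:ℝ) ≤ (n:ℝ) * x := by positivity
    have hw := wpos hβ.le hz
    simp only [W]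
    have hterm : ∀ k : ℕ, ((k:ℝ) + β) / (n:ℝ) * ((n:ℝ) * x) ^ k
          / (k.factorial * Real.Gamma ((k:ℝ) + β))
        = (1/(n:ℝ)) * (((k:ℝ) + β) * ((n:ℝ) * x) ^ k
          / (k.factorial * Real.Gamma ((k:ℝ) + β))) := fun k => by ring
    rw [tsum_congr hterm, tsum_mul_left, sum_shift hβ hz]
    have hr := hratio n hn
    have heq : (wright β ((n:ℝ)*x))⁻¹ * (1/(n:ℝ)
          * (((n:ℝ)*x) * wright (β+1) ((n:ℝ)*x) + β * wright β ((n:ℝ)*x)))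
        = x * (wright (β+1) ((n:ℝ)*x) / wright β ((n:ℝ)*x)) + β / (n:ℝ) := by
      field_simp
    rw [heq]
    have hmul : x * (wright (β+1) ((n:ℝ)*x) / wright β ((n:ℝ)*x)) ≤ x * (1/β) :=
      mul_le_mul_of_nonneg_left hr hx
    have : x * (1/β) = x / β := by ring
    linarith
  · have : x / β ≤ x := div_le_self hx hβ.le
    linarith
end
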